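/- Let C be a d-dimensional copula satisfying: for each p, ∂_p C exists and is continuous on {u ∈ [0,1]^d : u_p ∈ (0,1)}. Let D₀ be the set of continuous functions α on [0,1]^d with α(1,...,1)=0 and α(u)=0 whenever some coordinate of u is 0. Then the map Φ sending a d-variate distribution function H on [0,1]^d (with marginals vanishing at 0) to the function u ↦ H(H₁⁻(u₁),...,H_d⁻(u_d)) is Hadamard-differentiable at C tangentially to D₀, with derivative Φ'_C(α)(u) = α(u) − Σ_{p=1}^d ∂_pC(u)·α(u^{(p)}), where ∂_pC is extended by 0 to {u : u_p ∈ {0,1}} and u^{(p)} = (1,...,1,u_p,1,...,1). -/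

import Mathlib

open MeasureTheory Set Filter

/-- A `d`-dimensional copula. -/
def IsCopula (d : ℕ) (C : (Fin d → ℝ) → ℝ) : Prop :=
  ∃ μ : Measure (Fin d → ℝ), IsProbabilityMeasure μ ∧
    (∀ p : Fin d, ∀ t ∈ Icc (0:ℝ) 1, μ {x | x p ≤ t} = ENNReal.ofReal t) ∧
    (∀ u, C u = (μ {x | ∀ p, x p ≤ u p}).toReal)

/-- The unit cube `[0,1]^d`. -/
def cube (d : ℕ) : Set (Fin d → ℝ) := Set.univ.pi fun _ => Icc 0 1

/-- `x^{(p)}`: all coordinates `1` except the `p`-th, which is `x`. -/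
def margVec {d : ℕ} (p : Fin d) (s : ℝ) : Fin d → ℝ := Function.update (fun _ => 1) p s

open Topology Function

/-!
The `p`-th marginal of `Hₙ = C + tₙαₙ` is `x ↦ x + tₙ αₙ(x^{(p)})`, so its quantile at `u_p` is
`u_p - tₙ α(u^{(p)}) + o(tₙ)` uniformly in `u`, and `O(tₙ)`-close to `u_p` everywhere. Change the
coordinates of `u` into these quantiles one at a time. Where `ρ ≤ u_p ≤ 1 - ρ`, the mean value
theorem and the uniform continuity of `∂_pC` on the slab `ρ/2 ≤ x_p ≤ 1 - ρ/2` turn the increment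
of `C` into `-tₙ ∂_pC(u) α(u^{(p)}) + o(tₙ)`. Near the faces `u_p ∈ {0, 1}` it suffices that `C` is
`1`-Lipschitz in each coordinate, because `α(u^{(p)})` is small there (`α ∈ D₀`). Finally
`αₙ(quantiles) → α(u)` by uniform convergence and uniform continuity of `α`.
-/

lemma mem_cube {d : ℕ} {u : Fin d → ℝ} : u ∈ cube d ↔ ∀ p, u p ∈ Icc (0:ℝ) 1 :=
  mem_univ_pi

lemma update_mem_cube {d : ℕ} {w : Fin d → ℝ} (hw : w ∈ cube d) (k : Fin d) {s : ℝ}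
    (hs : s ∈ Icc (0:ℝ) 1) : update w k s ∈ cube d :=
  (update_mem_pi_iff_of_mem hw).2 fun _ => hs

lemma margVec_one {d : ℕ} (p : Fin d) : margVec p 1 = fun _ => (1:ℝ) :=
  update_eq_self p _

lemma margVec_mem_cube {d : ℕ} (p : Fin d) {s : ℝ} (hs : s ∈ Icc (0:ℝ) 1) :
    margVec p s ∈ cube d :=
  update_mem_cube (mem_cube.2 fun _ => right_mem_Icc.2 zero_le_one) p hs

lemma isCompact_cube (d : ℕ) : IsCompact (cube d) := isCompact_univ_pi fun _ => isCompact_Icc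

lemma dist_update_update_le {ι : Type*} [Fintype ι] [DecidableEq ι] (w : ι → ℝ) (p : ι)
    (x y : ℝ) :
    dist (update w p x) (update w p y) ≤ dist x y := by
  refine (dist_pi_le_iff dist_nonneg).2 fun q => ?_
  rcases eq_or_ne q p with rfl | hq
  · simp
  · simp [update_of_ne hq]

lemma dist_update_le_max {ι : Type*} [Fintype ι] [DecidableEq ι] (w u : ι → ℝ) (p : ι)
    (s : ℝ) :
    dist (update w p s) u ≤ max (dist w u) (dist s (u p)) := by
  refine (dist_pi_le_iff (le_max_of_le_left dist_nonneg)).2 fun q => ?_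
  rcases eq_or_ne q p with rfl | hq
  · simp
  · simpa [update_of_ne hq] using le_max_of_le_left (dist_le_pi_dist w u q)

lemma dist_piecewise_le {ι : Type*} [Fintype ι] (s : Set ι) [DecidablePred (· ∈ s)]
    (u v : ι → ℝ) : dist (s.piecewise v u) u ≤ dist v u := by
  refine (dist_pi_le_iff dist_nonneg).2 fun p => ?_
  by_cases hp : p ∈ s
  · simpa [hp] using dist_le_pi_dist v u p
  · simp [hp]

lemma sub_eq_sum_update_piecewise {d : ℕ} {X M : Type*} [AddCommGroup M]
    (f : (Fin d → X) → M) (u v : Fin d → X) :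
    f v - f u = ∑ k : Fin d,
      (f (update ((Iio k).piecewise v u) k (v k)) -
        f (update ((Iio k).piecewise v u) k (u k))) := by
  set g : ℕ → M := fun i => f fun p : Fin d => if (p : ℕ) < i then v p else u p
  have hmix_succ : ∀ k : Fin d, update ((Iio k).piecewise v u) k (v k) =
      fun p : Fin d => if (p : ℕ) < k + 1 then v p else u p := by
    intro k; funext p
    rcases eq_or_ne p k with rfl | hp
    · simp
    · have := Fin.val_ne_of_ne hp
      simp only [update_of_ne hp, piecewise, mem_Iio, Fin.lt_def]
      split_ifs <;> first | rfl | omega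
  have hmix : ∀ k : Fin d, update ((Iio k).piecewise v u) k (u k) =
      fun p : Fin d => if (p : ℕ) < k then v p else u p := by
    intro k; funext p
    rcases eq_or_ne p k with rfl | hp
    · simp
    · simp [update_of_ne hp, piecewise]
  simp only [hmix_succ, hmix]
  rw [Fin.sum_univ_eq_sum_range (fun i => g (i + 1) - g i), Finset.sum_range_sub]
  simp [g]

lemma eventually_abs_sub_le_of_continuousOn {X : Type*} [PseudoMetricSpace X] {f : X → ℝ}
    {s : Set X} (hs : IsCompact s) (hf : ContinuousOn f s) {σ : ℝ} (hσ : 0 < σ) :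
    ∀ᶠ η in 𝓝[>] (0:ℝ), ∀ x ∈ s, ∀ y ∈ s, dist x y ≤ η → |f x - f y| ≤ σ := by
  obtain ⟨δ, hδ, h⟩ :=
    Metric.uniformContinuousOn_iff_le.1 (hs.uniformContinuousOn_of_continuous hf) σ hσ
  filter_upwards [Ioo_mem_nhdsGT hδ] with η hη x hx y hy hxy
  simpa [Real.dist_eq] using h x hx y hy (hxy.trans hη.2.le)

lemma tendsto_iSup_abs_nhds_zero {ι κ : Type*} {l : Filter ι} {f : ι → κ → ℝ} (M : ℝ)
    (h : ∀ σ > 0, σ ≤ 1 → ∀ᶠ n in l, ∀ u, |f n u| ≤ M * σ) :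
    Tendsto (fun n => ⨆ u, |f n u|) l (𝓝 0) := by
  rw [Metric.tendsto_nhds]
  intro ε hε
  set σ := min 1 (ε / (2 * (|M| + 1)))
  have hσ : 0 < σ := lt_min one_pos (by positivity)
  have hσε : (|M| + 1) * σ < ε := by
    calc (|M| + 1) * σ ≤ (|M| + 1) * (ε / (2 * (|M| + 1))) := by gcongr; exact min_le_right _ _
      _ < ε := by field_simp; linarith
  filter_upwards [h σ hσ (min_le_left _ _)] with n hn
  have hsup : ⨆ u, |f n u| ≤ (|M| + 1) * σ := Real.iSup_le
    (fun u => (hn u).trans (by nlinarith [le_abs_self M])) (by positivity)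
  rw [Real.dist_0_eq_abs, abs_of_nonneg (Real.iSup_nonneg fun _ => abs_nonneg _)]
  exact hsup.trans_lt hσε

lemma exists_pos_forall_abs_sub_le_on_slabs {d : ℕ} {D : Fin d → (Fin d → ℝ) → ℝ}
    (hD : ∀ p : Fin d, ContinuousOn (D p) {u | u ∈ cube d ∧ u p ∈ Ioo (0:ℝ) 1})
    {ρ σ : ℝ} (hρ : 0 < ρ) (hσ : 0 < σ) :
    ∃ η > 0, ∀ p, ∀ x ∈ cube d ∩ {x | x p ∈ Icc (ρ / 2) (1 - ρ / 2)},
      ∀ y ∈ cube d ∩ {x | x p ∈ Icc (ρ / 2) (1 - ρ / 2)}, dist x y ≤ η → |D p x - D p y| ≤ σ := by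
  have hslab : ∀ p : Fin d, ∀ᶠ η in 𝓝[>] (0:ℝ),
      ∀ x ∈ cube d ∩ {x | x p ∈ Icc (ρ / 2) (1 - ρ / 2)},
      ∀ y ∈ cube d ∩ {x | x p ∈ Icc (ρ / 2) (1 - ρ / 2)}, dist x y ≤ η → |D p x - D p y| ≤ σ :=
    fun p => eventually_abs_sub_le_of_continuousOn
      ((isCompact_cube d).inter_right (isClosed_Icc.preimage (continuous_apply p)))
      ((hD p).mono fun x hx => ⟨hx.1, by linarith [hx.2.1], by linarith [hx.2.2]⟩) hσ
  obtain ⟨η, hη, hη0⟩ := ((eventually_all.2 hslab).and self_mem_nhdsWithin).exists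
  exact ⟨η, hη0, hη⟩

lemma abs_sub_sub_mul_le_of_hasDerivWithinAt {f f' : ℝ → ℝ} {a b L σ : ℝ}
    (hf : ∀ s ∈ uIcc a b, HasDerivWithinAt f (f' s) (uIcc a b) s)
    (hf' : ∀ s ∈ uIcc a b, |f' s - L| ≤ σ) : |f b - f a - L * (b - a)| ≤ σ * |b - a| := by
  have := convex_uIcc a b |>.norm_image_sub_le_of_norm_hasDerivWithin_le
    (f := fun s => f s - L * s) (fun s hs => (hf s hs).sub ((hasDerivWithinAt_id s _).const_mul L))
    (by simpa using hf') left_mem_uIcc right_mem_uIcc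
  convert this using 2 <;> simp only [Real.norm_eq_abs]; ring_nf

lemma abs_div_add_mul_le {X Δ r L A c κ θ : ℝ} (hr : r ≠ 0) (hc : 0 ≤ c)
    (hX : |X - L * Δ| ≤ c * |Δ|) (hΔ : |Δ| ≤ |r| * κ) (hΔA : |Δ + r * A| ≤ |r| * θ)
    (hL : |L| ≤ 1) : |X / r + L * A| ≤ c * κ + θ := by
  have hr' : 0 < |r| := abs_pos.2 hr
  have hsplit : X / r + L * A = (X - L * Δ) / r + L * ((Δ + r * A) / r) := by
    field_simp; ring
  rw [hsplit]
  calc |(X - L * Δ) / r + L * ((Δ + r * A) / r)|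
      ≤ |X - L * Δ| / |r| + |L| * (|Δ + r * A| / |r|) := by
        simpa [abs_div, abs_mul] using abs_add_le ((X - L * Δ) / r) (L * ((Δ + r * A) / r))
    _ ≤ c * κ + 1 * θ := by
        gcongr
        · rw [div_le_iff₀ hr']; nlinarith
        · rw [div_le_iff₀ hr']; linarith
    _ = c * κ + θ := by ring

lemma sInf_quantile_bounds {F : ℝ → ℝ} {q c δ η : ℝ} (hq : 0 ≤ q) (hδ : 0 ≤ δ)
    (hcδη : |c| + δ ≤ η) (h1 : q ≤ F 1) (hFη : ∀ x ∈ Icc (0:ℝ) 1, |F x - x| ≤ η)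
    (hF : ∀ x ∈ Icc (0:ℝ) 1, |x - q| ≤ η → |F x - (x + c)| ≤ δ) :
    sInf {x ∈ Icc (0:ℝ) 1 | q ≤ F x} ∈ Icc 0 1 ∧
      |sInf {x ∈ Icc (0:ℝ) 1 | q ≤ F x} - q| ≤ |c| + δ ∧
      (0 ≤ q - c + δ → |sInf {x ∈ Icc (0:ℝ) 1 | q ≤ F x} - (q - c)| ≤ δ) := by
  set S := {x ∈ Icc (0:ℝ) 1 | q ≤ F x}
  have hc := neg_abs_le c
  have hc' := le_abs_self c
  have h1S : (1:ℝ) ∈ S := ⟨right_mem_Icc.2 zero_le_one, h1⟩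
  have hbdd : BddBelow S := ⟨0, fun x hx => hx.1.1⟩
  have hlow : q - c - δ ≤ sInf S := by
    refine le_csInf ⟨1, h1S⟩ fun x ⟨hx, hqx⟩ => ?_
    by_cases hxq : |x - q| ≤ η
    · linarith [(abs_le.1 (hF x hx hxq)).2]
    · rcases lt_abs.1 (not_le.1 hxq) with h | h
      · linarith
      · linarith [(abs_le.1 (hFη x hx)).2]
  have hup : ∀ y, 0 ≤ y → q - c + δ ≤ y → y - q ≤ |c| + δ → sInf S ≤ y := by
    intro y hy0 hyl hyu
    by_cases hy1 : y ≤ 1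
    · refine csInf_le hbdd ⟨⟨hy0, hy1⟩, ?_⟩
      have hyq : |y - q| ≤ η := abs_le.2 ⟨by linarith, by linarith⟩
      linarith [(abs_le.1 (hF y ⟨hy0, hy1⟩ hyq)).1]
    · exact (csInf_le hbdd h1S).trans (not_le.1 hy1).le
  refine ⟨⟨le_csInf ⟨1, h1S⟩ fun x hx => hx.1.1, csInf_le hbdd h1S⟩, abs_le.2 ⟨?_, ?_⟩,
    fun h => abs_le.2 ⟨by linarith, by linarith [hup _ h le_rfl (by linarith)]⟩⟩
  · linarith
  · linarith [hup (q + |c| + δ) (by positivity) (by linarith) (by linarith)]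

-- The set may be empty: then its `sSup` is the junk value `0`, which satisfies the bounds.
lemma sSup_zero_set_bounds {F : ℝ → ℝ} {δ η : ℝ} (hδ : 0 ≤ δ)
    (hFη : ∀ x ∈ Icc (0:ℝ) 1, |F x - x| ≤ η)
    (hF : ∀ x ∈ Icc (0:ℝ) 1, |x| ≤ η → |F x - x| ≤ δ) :
    sSup {x ∈ Icc (0:ℝ) 1 | F x = 0} ∈ Icc 0 1 ∧ sSup {x ∈ Icc (0:ℝ) 1 | F x = 0} ≤ δ := by
  have hle : ∀ x ∈ {x ∈ Icc (0:ℝ) 1 | F x = 0}, x ≤ δ := fun x ⟨hx, hFx⟩ => by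
    have hx' : |F x - x| = |x| := by rw [hFx, zero_sub, abs_neg]
    exact (le_abs_self x).trans (hx' ▸ hF x hx (hx' ▸ hFη x hx))
  exact ⟨⟨Real.sSup_nonneg fun x hx => hx.1.1, Real.sSup_le (fun x hx => hx.1.2) zero_le_one⟩,
    Real.sSup_le hle hδ⟩

lemma abs_apply_margVec_le_of_notMem_Icc {d : ℕ} {α : (Fin d → ℝ) → ℝ} {σ ρ s : ℝ} (p : Fin d)
    (hαρ : ∀ x ∈ cube d, ∀ y ∈ cube d, dist x y ≤ ρ → |α x - α y| ≤ σ)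
    (hα0 : α (margVec p 0) = 0) (hα1 : α (margVec p 1) = 0) (hs : s ∈ Icc (0:ℝ) 1)
    (hsρ : s ∉ Icc ρ (1 - ρ)) : |α (margVec p s)| ≤ σ := by
  have hmod := hαρ _ (margVec_mem_cube p hs)
  rcases not_and_or.1 hsρ with h | h
  · simpa [hα0] using hmod _ (margVec_mem_cube p (left_mem_Icc.2 zero_le_one))
      ((dist_update_update_le _ p s 0).trans
        (by rw [Real.dist_eq, sub_zero, abs_of_nonneg hs.1]; linarith))
  · simpa [hα1] using hmod _ (margVec_mem_cube p (right_mem_Icc.2 zero_le_one))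
      ((dist_update_update_le _ p s 1).trans
        (by rw [Real.dist_eq, abs_of_nonpos (by linarith [hs.2])]; linarith))

lemma measure_le_margVec_eq {d : ℕ} {μ : Measure (Fin d → ℝ)} (h : ∀ q, μ {x | 1 < x q} = 0)
    (p : Fin d) (s : ℝ) : μ {x | ∀ q, x q ≤ margVec p s q} = μ {x | x p ≤ s} := by
  refine le_antisymm (measure_mono fun x hx => by simpa [margVec] using hx p) (measure_mono_ae ?_)
  have hle : ∀ᵐ x ∂μ, ∀ q, x q ≤ 1 :=
    ae_all_iff.2 fun q => by simpa using measure_eq_zero_iff_ae_notMem.1 (h q)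
  filter_upwards [hle] with x hx hxp q
  rcases eq_or_ne q p with rfl | hq
  · simpa [margVec] using (show x q ≤ s from hxp)
  · simpa [margVec, update_of_ne hq] using hx q

lemma measure_one_lt_eq_zero_iff {d : ℕ} {μ : Measure (Fin d → ℝ)} [IsProbabilityMeasure μ]
    (q : Fin d) :
    μ {x | 1 < x q} = 0 ↔ μ {x | x q ≤ 1} = 1 := by
  have hcompl : {x : Fin d → ℝ | 1 < x q} = {x | x q ≤ 1}ᶜ := by ext; simp
  rw [hcompl, prob_compl_eq_zero_iff (measurableSet_le (measurable_pi_apply q) measurable_const)]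

namespace IsCopula

variable {d : ℕ} {C : (Fin d → ℝ) → ℝ}

lemma apply_margVec (hC : IsCopula d C) (p : Fin d) {s : ℝ} (hs : s ∈ Icc (0:ℝ) 1) :
    C (margVec p s) = s := by
  obtain ⟨μ, _, hμ, hCμ⟩ := hC
  have hμ1 : ∀ q, μ {x | 1 < x q} = 0 := fun q =>
    (measure_one_lt_eq_zero_iff q).2 (by simpa using hμ q 1 (right_mem_Icc.2 zero_le_one))
  rw [hCμ, measure_le_margVec_eq hμ1 p s, hμ p s hs, ENNReal.toReal_ofReal hs.1]

lemma update_mono (hC : IsCopula d C) (w : Fin d → ℝ) (k : Fin d) {x y : ℝ} (hxy : x ≤ y) :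
    C (update w k x) ≤ C (update w k y) := by
  obtain ⟨μ, _, -, hCμ⟩ := hC
  rw [hCμ, hCμ]
  refine ENNReal.toReal_mono (measure_ne_top μ _) (measure_mono fun z hz q => ?_)
  rcases eq_or_ne q k with rfl | hq
  · simpa using (show z q ≤ x by simpa using hz q).trans hxy
  · simpa [update_of_ne hq] using hz q

lemma update_le_update_add (hC : IsCopula d C) (w : Fin d → ℝ) (k : Fin d) {x y : ℝ}
    (hy : 0 ≤ y) (hyx : y ≤ x) (hx : x ≤ 1) :
    C (update w k x) ≤ C (update w k y) + (x - y) := by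
  obtain ⟨μ, _, hμ, hCμ⟩ := hC
  have hslab : μ ({z | z k ≤ x} \ {z | z k ≤ y}) = ENNReal.ofReal (x - y) := by
    have hyx' : {z : Fin d → ℝ | z k ≤ y} ⊆ {z | z k ≤ x} := fun z hz => le_trans hz hyx
    rw [measure_sdiff hyx'
        (measurableSet_le (measurable_pi_apply k) measurable_const).nullMeasurableSet
        (measure_ne_top μ _), hμ k x ⟨hy.trans hyx, hx⟩, hμ k y ⟨hy, hyx.trans hx⟩,
      ENNReal.ofReal_sub _ hy]
  have hsub : {z : Fin d → ℝ | ∀ q, z q ≤ update w k x q} ⊆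
      {z | ∀ q, z q ≤ update w k y q} ∪ ({z | z k ≤ x} \ {z | z k ≤ y}) := by
    intro z hz
    by_cases hzk : z k ≤ y
    · refine Or.inl fun q => ?_
      rcases eq_or_ne q k with rfl | hq
      · simpa using hzk
      · simpa [update_of_ne hq] using hz q
    · exact Or.inr ⟨by simpa using hz k, hzk⟩
  have hle := (measure_mono hsub).trans (measure_union_le (μ := μ) _ _)
  rw [hslab] at hle
  rw [hCμ, hCμ, ← ENNReal.toReal_ofReal (sub_nonneg.2 hyx),
    ← ENNReal.toReal_add (measure_ne_top μ _) ENNReal.ofReal_ne_top]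
  exact ENNReal.toReal_mono (by finiteness) hle

lemma lipschitzOnWith_update (hC : IsCopula d C) (w : Fin d → ℝ) (k : Fin d) :
    LipschitzOnWith 1 (fun s => C (update w k s)) (Icc 0 1) := by
  refine LipschitzOnWith.of_le_add fun x hx y hy => ?_
  rcases le_total x y with hxy | hyx
  · exact (hC.update_mono w k hxy).trans (le_add_of_nonneg_right dist_nonneg)
  · simpa [Real.dist_eq, abs_of_nonneg (sub_nonneg.2 hyx)] using
      hC.update_le_update_add w k hy.1 hyx hx.2

lemma perturbation_margVec_one_eq_zero (hC : IsCopula d C) {β : (Fin d → ℝ) → ℝ} {r : ℝ}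
    (hr : r ≠ 0) {ν : Measure (Fin d → ℝ)} [IsProbabilityMeasure ν] (hν : ∀ q, ν {x | 1 < x q} = 0)
    (hH : ∀ u ∈ cube d, C u + r * β u = (ν {x | ∀ q, x q ≤ u q}).toReal) (p : Fin d) :
    β (margVec p 1) = 0 := by
  have h1 : (1:ℝ) ∈ Icc 0 1 := right_mem_Icc.2 zero_le_one
  have := hH _ (margVec_mem_cube p h1)
  rw [measure_le_margVec_eq hν, (measure_one_lt_eq_zero_iff p).1 (hν p), hC.apply_margVec p h1,
    ENNReal.toReal_one, add_eq_left, mul_eq_zero] at this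
  exact this.resolve_left hr

lemma abs_le_one_of_hasDerivWithinAt (hC : IsCopula d C) {u : Fin d → ℝ} {k : Fin d} {L : ℝ}
    (hL : HasDerivWithinAt (fun s => C (update u k s)) L (Icc 0 1) (u k))
    (huk : u k ∈ Ioo (0:ℝ) 1) : |L| ≤ 1 := by
  have hnhds := Icc_mem_nhds huk.1 huk.2
  simpa using (hL.hasDerivAt hnhds).le_of_lipschitzOn hnhds (hC.lipschitzOnWith_update u k)

lemma abs_deriv_le_one (hC : IsCopula d C) {D : (Fin d → ℝ) → ℝ} {k : Fin d}
    (hD : ∀ u ∈ cube d, u k ∈ Ioo (0:ℝ) 1 →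
      HasDerivWithinAt (fun s => C (update u k s)) (D u) (Icc (0:ℝ) 1) (u k))
    (hDbdry : ∀ u, (u k = 0 ∨ u k = 1) → D u = 0) {u : Fin d → ℝ} (hu : u ∈ cube d) :
    |D u| ≤ 1 := by
  obtain ⟨h0, h1⟩ := mem_cube.1 hu k
  rcases h0.eq_or_lt with h0 | h0
  · simp [hDbdry u (Or.inl h0.symm)]
  rcases h1.eq_or_lt with h1 | h1
  · simp [hDbdry u (Or.inr h1)]
  exact hC.abs_le_one_of_hasDerivWithinAt (hD u hu ⟨h0, h1⟩) ⟨h0, h1⟩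

lemma abs_update_sub_div_add_mul_le_of_mem_Icc (hC : IsCopula d C) {D : (Fin d → ℝ) → ℝ}
    {k : Fin d}
    (hD : ∀ u ∈ cube d, u k ∈ Ioo (0:ℝ) 1 →
      HasDerivWithinAt (fun s => C (update u k s)) (D u) (Icc (0:ℝ) 1) (u k))
    {ρ η σ r A b κ θ : ℝ}
    (hDη : ∀ x ∈ cube d ∩ {x | x k ∈ Icc (ρ / 2) (1 - ρ / 2)},
      ∀ y ∈ cube d ∩ {x | x k ∈ Icc (ρ / 2) (1 - ρ / 2)}, dist x y ≤ η → |D x - D y| ≤ σ)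
    {u w : Fin d → ℝ} (hu : u ∈ cube d) (hw : w ∈ cube d) (hwu : dist w u ≤ η)
    (hρ : 0 < ρ) (huk : u k ∈ Icc ρ (1 - ρ)) (hr : r ≠ 0) (hσ : 0 ≤ σ)
    (hbu : |b - u k| ≤ |r| * κ) (hκη : |r| * κ ≤ η) (hκρ : |r| * κ ≤ ρ / 2)
    (hbuA : |b - u k + r * A| ≤ |r| * θ) :
    |(C (update w k b) - C (update w k (u k))) / r + D u * A| ≤ σ * κ + θ := by
  have hnear : ∀ s ∈ uIcc (u k) b, |s - u k| ≤ |r| * κ := fun s hs =>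
    (abs_sub_left_of_mem_uIcc hs).trans hbu
  have hslab : ∀ s ∈ uIcc (u k) b, s ∈ Icc (ρ / 2) (1 - ρ / 2) := fun s hs => by
    have := abs_le.1 (hnear s hs)
    constructor <;> linarith [huk.1, huk.2]
  have hmem : ∀ s ∈ uIcc (u k) b, update w k s ∈ cube d ∩ {x | x k ∈ Icc (ρ / 2) (1 - ρ / 2)} :=
    fun s hs => ⟨update_mem_cube hw k ⟨by linarith [(hslab s hs).1], by linarith [(hslab s hs).2]⟩,
      by simpa using hslab s hs⟩
  have hderiv : ∀ s ∈ uIcc (u k) b,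
      HasDerivWithinAt (fun s => C (update w k s)) (D (update w k s)) (uIcc (u k) b) s := by
    intro s hs
    have hs' : s ∈ Ioo (0:ℝ) 1 := ⟨by linarith [(hslab s hs).1], by linarith [(hslab s hs).2]⟩
    have := hD _ (hmem s hs).1 (by simpa using hs')
    simp only [update_idem, update_self] at this
    exact (this.hasDerivAt (Icc_mem_nhds hs'.1 hs'.2)).hasDerivWithinAt
  have hcont : ∀ s ∈ uIcc (u k) b, |D (update w k s) - D u| ≤ σ := fun s hs =>
    hDη _ (hmem s hs) u ⟨hu, by simpa using ⟨by linarith [huk.1], by linarith [huk.2]⟩⟩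
      ((dist_update_le_max w u k s).trans
        (max_le hwu (by rw [Real.dist_eq]; exact (hnear s hs).trans hκη)))
  have huk' : u k ∈ Ioo (0:ℝ) 1 := ⟨by linarith [huk.1], by linarith [huk.2]⟩
  exact abs_div_add_mul_le hr hσ (abs_sub_sub_mul_le_of_hasDerivWithinAt hderiv hcont) hbu hbuA
    (hC.abs_le_one_of_hasDerivWithinAt (hD u hu huk') huk')

lemma marginal_quantile_bounds (hC : IsCopula d C) {α β : (Fin d → ℝ) → ℝ} {r σ K ρ q v : ℝ}
    (p : Fin d) (hq : q ∈ Icc (0:ℝ) 1) (hσ : 0 ≤ σ) (hσ1 : σ ≤ 1)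
    (hK : ∀ x ∈ cube d, |α x| ≤ K) (hβα : ∀ x ∈ cube d, |β x - α x| ≤ σ)
    (hαρ : ∀ x ∈ cube d, ∀ y ∈ cube d, dist x y ≤ ρ → |α x - α y| ≤ σ)
    (hα0 : α (margVec p 0) = 0) (hβ1 : β (margVec p 1) = 0) (hrρ : |r| * (K + 2) ≤ ρ)
    (hv : 0 < q → v = sInf {x ∈ Icc (0:ℝ) 1 | q ≤ C (margVec p x) + r * β (margVec p x)})
    (hv0 : q = 0 → v = sSup {x ∈ Icc (0:ℝ) 1 | C (margVec p x) + r * β (margVec p x) = 0}) :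
    v ∈ Icc 0 1 ∧ |v - q| ≤ |r| * (|α (margVec p q)| + 2 * σ) ∧
      (ρ ≤ q → |v - q + r * α (margVec p q)| ≤ 2 * |r| * σ) := by
  set F := fun x => C (margVec p x) + r * β (margVec p x)
  have hFx : ∀ x ∈ Icc (0:ℝ) 1, F x - x = r * β (margVec p x) := fun x hx => by
    simp [F, hC.apply_margVec p hx]
  have hK0 : 0 ≤ K := (abs_nonneg _).trans (hK _ (margVec_mem_cube p hq))
  have hFη : ∀ x ∈ Icc (0:ℝ) 1, |F x - x| ≤ ρ := fun x hx => by
    have hβ : |β (margVec p x)| ≤ K + 2 := by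
      have := abs_sub_abs_le_abs_sub (β (margVec p x)) (α (margVec p x))
      linarith [hβα _ (margVec_mem_cube p hx), hK _ (margVec_mem_cube p hx)]
    rw [hFx x hx, abs_mul]
    exact (mul_le_mul_of_nonneg_left hβ (abs_nonneg r)).trans hrρ
  have hF : ∀ x ∈ Icc (0:ℝ) 1, |x - q| ≤ ρ →
      |F x - (x + r * α (margVec p q))| ≤ 2 * |r| * σ := fun x hx hxq => by
    have hβ : |β (margVec p x) - α (margVec p q)| ≤ 2 * σ := by
      have h1 := hβα _ (margVec_mem_cube p hx)
      have h2 := hαρ _ (margVec_mem_cube p hx) _ (margVec_mem_cube p hq)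
        ((dist_update_update_le _ p x q).trans (by rwa [Real.dist_eq]))
      calc |β (margVec p x) - α (margVec p q)|
          ≤ |β (margVec p x) - α (margVec p x)| + |α (margVec p x) - α (margVec p q)| :=
            abs_sub_le _ _ _
        _ ≤ 2 * σ := by linarith
    rw [← sub_sub, hFx x hx, ← mul_sub, abs_mul]
    nlinarith [abs_nonneg r]
  have hrσ : |r| * σ ≤ |r| := mul_le_of_le_one_right (abs_nonneg r) hσ1
  rcases hq.1.eq_or_lt with rfl | hq0
  · obtain ⟨hmem, hle⟩ := sSup_zero_set_bounds (F := F) (δ := 2 * |r| * σ) (by positivity) hFη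
      fun x hx hx' => by simpa [hα0] using hF x hx (by simpa using hx')
    have hv' : v = sSup {x ∈ Icc (0:ℝ) 1 | F x = 0} := hv0 rfl
    rw [hv', hα0, sub_zero, mul_zero, add_zero, abs_zero, zero_add, abs_of_nonneg hmem.1]
    exact ⟨hmem, by linarith, fun _ => hle⟩
  · have hc : |r * α (margVec p q)| ≤ |r| * K := by
      rw [abs_mul]; exact mul_le_mul_of_nonneg_left (hK _ (margVec_mem_cube p hq)) (abs_nonneg r)
    have hF1 : q ≤ F 1 := by
      simpa [F, hβ1, hC.apply_margVec p (right_mem_Icc.2 zero_le_one)] using hq.2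
    obtain ⟨hmem, hcrude, hfine⟩ :=
      sInf_quantile_bounds hq.1 (by positivity) (by linarith) hF1 hFη hF
    have hv' : v = sInf {x ∈ Icc (0:ℝ) 1 | q ≤ F x} := hv hq0
    rw [hv']
    refine ⟨hmem, hcrude.trans (by rw [abs_mul]; linarith), fun hρq => ?_⟩
    rw [show ∀ a, a - q + r * α (margVec p q) = a - (q - r * α (margVec p q)) by intro; ring]
    exact hfine (by nlinarith [le_abs_self (r * α (margVec p q)), abs_nonneg r])

lemma abs_update_sub_div_add_mul_le (hC : IsCopula d C) {D : (Fin d → ℝ) → ℝ} {k : Fin d}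
    (hD : ∀ u ∈ cube d, u k ∈ Ioo (0:ℝ) 1 →
      HasDerivWithinAt (fun s => C (update u k s)) (D u) (Icc (0:ℝ) 1) (u k))
    (hDbdry : ∀ u, (u k = 0 ∨ u k = 1) → D u = 0)
    {α : (Fin d → ℝ) → ℝ} {r σ K ρ η b : ℝ} (hr : r ≠ 0) (hσ : 0 ≤ σ) (hσ1 : σ ≤ 1) (hρ : 0 < ρ)
    (hK : ∀ x ∈ cube d, |α x| ≤ K)
    (hαρ : ∀ x ∈ cube d, ∀ y ∈ cube d, dist x y ≤ ρ → |α x - α y| ≤ σ)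
    (hα0 : α (margVec k 0) = 0) (hα1 : α (margVec k 1) = 0)
    (hDη : ∀ x ∈ cube d ∩ {x | x k ∈ Icc (ρ / 2) (1 - ρ / 2)},
      ∀ y ∈ cube d ∩ {x | x k ∈ Icc (ρ / 2) (1 - ρ / 2)}, dist x y ≤ η → |D x - D y| ≤ σ)
    (hrη : |r| * (K + 2) ≤ η) (hrρ : |r| * (K + 2) ≤ ρ / 2)
    {u w : Fin d → ℝ} (hu : u ∈ cube d) (hw : w ∈ cube d) (hwu : dist w u ≤ |r| * (K + 2))
    (hb : b ∈ Icc (0:ℝ) 1) (hbu : |b - u k| ≤ |r| * (|α (margVec k (u k))| + 2 * σ))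
    (hbuA : ρ ≤ u k → |b - u k + r * α (margVec k (u k))| ≤ 2 * |r| * σ) :
    |(C (update w k b) - C (update w k (u k))) / r + D u * α (margVec k (u k))|
      ≤ (K + 4) * σ := by
  set A := α (margVec k (u k))
  have huk01 := mem_cube.1 hu k
  by_cases huk : u k ∈ Icc ρ (1 - ρ)
  · have hAK : |A| + 2 * σ ≤ K + 2 := by linarith [hK _ (margVec_mem_cube k huk01)]
    have hbu' : |b - u k| ≤ |r| * (K + 2) :=
      hbu.trans (mul_le_mul_of_nonneg_left hAK (abs_nonneg r))
    have hbuA' : |b - u k + r * A| ≤ |r| * (2 * σ) := by linarith [hbuA huk.1]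
    calc _ ≤ σ * (K + 2) + 2 * σ := hC.abs_update_sub_div_add_mul_le_of_mem_Icc hD hDη hu hw
            (hwu.trans hrη) hρ huk hr hσ hbu' hrη hrρ hbuA'
      _ = (K + 4) * σ := by ring
  · have hA : |A| ≤ σ := abs_apply_margVec_le_of_notMem_Icc k hαρ hα0 hα1 huk01 huk
    have hK0 : 0 ≤ K := (abs_nonneg _).trans (hK u hu)
    have hlip : |C (update w k b) - C (update w k (u k))| ≤ |b - u k| := by
      simpa [Real.dist_eq] using
        (hC.lipschitzOnWith_update w k).dist_le_mul b hb (u k) huk01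
    have hL := hC.abs_deriv_le_one hD hDbdry hu
    calc _ ≤ |C (update w k b) - C (update w k (u k))| / |r| + |D u| * |A| := by
          simpa [abs_div, abs_mul] using
            abs_add_le ((C (update w k b) - C (update w k (u k))) / r) (D u * A)
      _ ≤ (|A| + 2 * σ) + 1 * σ := by
          gcongr
          rw [div_le_iff₀ (abs_pos.2 hr), mul_comm]
          exact hlip.trans hbu
      _ ≤ (K + 4) * σ := by nlinarith

lemma abs_error_le (hC : IsCopula d C) {D : Fin d → (Fin d → ℝ) → ℝ}
    (hD : ∀ p : Fin d, ∀ u ∈ cube d, u p ∈ Ioo (0:ℝ) 1 →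
      HasDerivWithinAt (fun s => C (update u p s)) (D p u) (Icc (0:ℝ) 1) (u p))
    (hDbdry : ∀ p : Fin d, ∀ u, (u p = 0 ∨ u p = 1) → D p u = 0)
    {α β : (Fin d → ℝ) → ℝ} {r σ K ρ η : ℝ} (hr : r ≠ 0) (hσ : 0 ≤ σ) (hσ1 : σ ≤ 1) (hρ : 0 < ρ)
    (hK : ∀ x ∈ cube d, |α x| ≤ K) (hβα : ∀ x ∈ cube d, |β x - α x| ≤ σ)
    (hαρ : ∀ x ∈ cube d, ∀ y ∈ cube d, dist x y ≤ ρ → |α x - α y| ≤ σ)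
    (hα0 : ∀ p, α (margVec p 0) = 0) (hα1 : ∀ p, α (margVec p 1) = 0)
    (hDη : ∀ p, ∀ x ∈ cube d ∩ {x | x p ∈ Icc (ρ / 2) (1 - ρ / 2)},
      ∀ y ∈ cube d ∩ {x | x p ∈ Icc (ρ / 2) (1 - ρ / 2)}, dist x y ≤ η → |D p x - D p y| ≤ σ)
    (hrη : |r| * (K + 2) ≤ η) (hrρ : |r| * (K + 2) ≤ ρ / 2)
    {u v : Fin d → ℝ} (hu : u ∈ cube d) (hv : ∀ p, v p ∈ Icc (0:ℝ) 1)
    (hvu : ∀ p, |v p - u p| ≤ |r| * (|α (margVec p (u p))| + 2 * σ))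
    (hvuA : ∀ p, ρ ≤ u p → |v p - u p + r * α (margVec p (u p))| ≤ 2 * |r| * σ) :
    |(C v + r * β v - C u) / r - (α u - ∑ p, D p u * α (margVec p (u p)))|
      ≤ (d + 1) * (K + 4) * σ := by
  have hvc : v ∈ cube d := mem_cube.2 hv
  have hK0 : 0 ≤ K := (abs_nonneg _).trans (hK u hu)
  have hAK : ∀ p, |α (margVec p (u p))| + 2 * σ ≤ K + 2 := fun p => by
    linarith [hK _ (margVec_mem_cube p (mem_cube.1 hu p))]
  have hvu' : ∀ p, |v p - u p| ≤ |r| * (K + 2) := fun p =>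
    (hvu p).trans (mul_le_mul_of_nonneg_left (hAK p) (abs_nonneg r))
  have hdist : dist v u ≤ |r| * (K + 2) :=
    (dist_pi_le_iff (by positivity)).2 fun p => by rw [Real.dist_eq]; exact hvu' p
  have hterm : ∀ k : Fin d, |(C (update ((Iio k).piecewise v u) k (v k))
      - C (update ((Iio k).piecewise v u) k (u k))) / r + D k u * α (margVec k (u k))|
      ≤ (K + 4) * σ := fun k =>
    hC.abs_update_sub_div_add_mul_le (hD k) (hDbdry k) hr hσ hσ1 hρ hK hαρ (hα0 k) (hα1 k)
      (hDη k) hrη hrρ hu (piecewise_mem_pi _ hvc hu) ((dist_piecewise_le _ u v).trans hdist)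
      (hv k) (hvu k) (hvuA k)
  have hsplit : (C v + r * β v - C u) / r - (α u - ∑ p, D p u * α (margVec p (u p))) =
      ∑ k : Fin d, ((C (update ((Iio k).piecewise v u) k (v k))
        - C (update ((Iio k).piecewise v u) k (u k))) / r + D k u * α (margVec k (u k)))
      + (β v - α u) := by
    rw [Finset.sum_add_distrib, ← Finset.sum_div, ← sub_eq_sum_update_piecewise]
    field_simp
    ring
  have hβv : |β v - α u| ≤ 2 * σ := by
    have h1 := hβα v hvc
    have h2 := hαρ v hvc u hu (hdist.trans (by linarith))
    calc |β v - α u| ≤ |β v - α v| + |α v - α u| := abs_sub_le _ _ _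
      _ ≤ 2 * σ := by linarith
  rw [hsplit]
  calc _ ≤ ∑ k : Fin d, (K + 4) * σ + 2 * σ :=
        (abs_add_le _ _).trans (add_le_add ((Finset.abs_sum_le_sum_abs _ _).trans
          (Finset.sum_le_sum fun k _ => hterm k)) hβv)
    _ ≤ (d + 1) * (K + 4) * σ := by
        rw [Finset.sum_const, Finset.card_univ, Fintype.card_fin, nsmul_eq_mul]
        nlinarith

end IsCopula


theorem Phi_hadamard_differentiable_at_copula_general
    (d : ℕ) (C : (Fin d → ℝ) → ℝ) (hC : IsCopula d C)
    (D : Fin d → (Fin d → ℝ) → ℝ)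
    (hDderiv : ∀ p : Fin d, ∀ u ∈ cube d, u p ∈ Ioo (0:ℝ) 1 →
      HasDerivWithinAt (fun s => C (Function.update u p s)) (D p u) (Icc (0:ℝ) 1) (u p))
    (hDcont : ∀ p : Fin d, ContinuousOn (D p) {u | u ∈ cube d ∧ u p ∈ Ioo (0:ℝ) 1})
    (hDbdry : ∀ p : Fin d, ∀ u, (u p = 0 ∨ u p = 1) → D p u = 0)
    (t : ℕ → ℝ) (ht0 : ∀ n, t n ≠ 0) (htt : Tendsto t atTop (nhds 0))
    (α : (Fin d → ℝ) → ℝ) (αn : ℕ → (Fin d → ℝ) → ℝ)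
    (hunif : TendstoUniformlyOn αn α atTop (cube d))
    (hαcont : ContinuousOn α (cube d))
    (hα1 : α (fun _ => 1) = 0)
    (hα0 : ∀ u, (∃ p, u p = 0) → α u = 0)
    -- `Hₙ = C + tₙαₙ` is a distribution function on `[0,1]^d` with marginals vanishing at 0:
    (hdom : ∀ n, ∃ ν : Measure (Fin d → ℝ), IsProbabilityMeasure ν ∧
      (∀ p : Fin d, ν {x | x p ≤ 0} = 0 ∧ ν {x | 1 < x p} = 0) ∧
      (∀ u ∈ cube d, C u + t n * αn n u = (ν {x | ∀ p, x p ≤ u p}).toReal))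
    -- generalized inverses of the marginals of `Hₙ`:
    (Finv : ℕ → Fin d → ℝ → ℝ)
    (hFinv : ∀ n (p : Fin d), ∀ q ∈ Ioc (0:ℝ) 1,
      Finv n p q = sInf {x ∈ Icc (0:ℝ) 1 |
        q ≤ C (margVec p x) + t n * αn n (margVec p x)})
    (hFinv0 : ∀ n (p : Fin d), Finv n p 0 = sSup {x ∈ Icc (0:ℝ) 1 |
        C (margVec p x) + t n * αn n (margVec p x) = 0}) :
    Tendsto (fun n => ⨆ u : cube d,
      |((C (fun p => Finv n p (u.1 p)) + t n * αn n (fun p => Finv n p (u.1 p))) - C u.1) / t n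
        - (α u.1 - ∑ p, D p u.1 * α (margVec p (u.1 p)))|) atTop (nhds 0) := by
  obtain ⟨K, hK⟩ : ∃ K, ∀ x ∈ cube d, |α x| ≤ K := by
    simpa using (isCompact_cube d).exists_bound_of_continuousOn hαcont
  refine tendsto_iSup_abs_nhds_zero ((d + 1) * (K + 4)) fun σ hσ hσ1 => ?_
  obtain ⟨ρ, hαρ, hρ : 0 < ρ⟩ :=
    ((eventually_abs_sub_le_of_continuousOn (isCompact_cube d) hαcont hσ).and
      self_mem_nhdsWithin).exists
  obtain ⟨η, hη, hDη⟩ := exists_pos_forall_abs_sub_le_on_slabs hDcont hρ hσ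
  have hsmall : ∀ᶠ n in atTop, |t n| * (K + 2) < min η (ρ / 2) := by
    have hlim := htt.abs.mul_const (K + 2)
    rw [abs_zero, zero_mul] at hlim
    exact hlim.eventually_lt_const (lt_min hη (half_pos hρ))
  filter_upwards [Metric.tendstoUniformlyOn_iff.1 hunif σ hσ, hsmall] with n hαn hr ⟨u, hu⟩
  obtain ⟨ν, _, hν, hνH⟩ := hdom n
  have hβα : ∀ x ∈ cube d, |αn n x - α x| ≤ σ := fun x hx => by
    simpa [Real.dist_eq, abs_sub_comm] using (hαn x hx).le
  have hα0' : ∀ p, α (margVec p 0) = 0 := fun p => hα0 _ ⟨p, by simp [margVec]⟩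
  have hα1' : ∀ p, α (margVec p 1) = 0 := fun p => by rw [margVec_one]; exact hα1
  have hquant := fun p => hC.marginal_quantile_bounds p (mem_cube.1 hu p) hσ.le hσ1 hK hβα hαρ
    (hα0' p) (hC.perturbation_margVec_one_eq_zero (ht0 n) (fun q => (hν q).2) hνH p)
    (by linarith [hr.le.trans (min_le_right _ _)])
    (fun h => hFinv n p _ ⟨h, (mem_cube.1 hu p).2⟩) (fun h => h ▸ hFinv0 n p)
  exact hC.abs_error_le hDderiv hDbdry (ht0 n) hσ.le hσ1 hρ hK hβα hαρ hα0' hα1' hDη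
    (hr.le.trans (min_le_left _ _)) (hr.le.trans (min_le_right _ _)) hu (fun p => (hquant p).1)
    (fun p => (hquant p).2.1) (fun p => (hquant p).2.2)

/-- Theorem: Hadamard differentiability of `Φ : H ↦ H(H₁⁻,…,H_d⁻)`.
Under Segers' condition, for any sequences `tₙ → 0` (`tₙ ≠ 0`) and bounded `αₙ` with
`αₙ → α ∈ D₀` uniformly and `Hₙ = C + tₙαₙ` a distribution function on `[0,1]^d` with
marginals vanishing at `0`, one has
`‖(Φ(C + tₙαₙ) − Φ(C))/tₙ − (α − Σ_p ∂_pC·α(·^{(p)}))‖_∞ → 0`. -/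
theorem Phi_hadamard_differentiable_at_copula
    (d : ℕ) (C : (Fin d → ℝ) → ℝ) (hC : IsCopula d C)
    (D : Fin d → (Fin d → ℝ) → ℝ)
    (hDderiv : ∀ p : Fin d, ∀ u ∈ cube d, u p ∈ Ioo (0:ℝ) 1 →
      HasDerivWithinAt (fun s => C (Function.update u p s)) (D p u) (Icc (0:ℝ) 1) (u p))
    (hDcont : ∀ p : Fin d, ContinuousOn (D p) {u | u ∈ cube d ∧ u p ∈ Ioo (0:ℝ) 1})
    (hDbdry : ∀ p : Fin d, ∀ u, (u p = 0 ∨ u p = 1) → D p u = 0)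
    (t : ℕ → ℝ) (ht0 : ∀ n, t n ≠ 0) (htt : Tendsto t atTop (nhds 0))
    (α : (Fin d → ℝ) → ℝ) (αn : ℕ → (Fin d → ℝ) → ℝ)
    (hbdd : ∀ n, ∃ M, ∀ u ∈ cube d, |αn n u| ≤ M)
    (hunif : TendstoUniformlyOn αn α atTop (cube d))
    (hαcont : ContinuousOn α (cube d))
    (hα1 : α (fun _ => 1) = 0)
    (hα0 : ∀ u, (∃ p, u p = 0) → α u = 0)
    -- `Hₙ = C + tₙαₙ` is a distribution function on `[0,1]^d` with marginals vanishing at 0: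
    (hdom : ∀ n, ∃ ν : Measure (Fin d → ℝ), IsProbabilityMeasure ν ∧
      (∀ p : Fin d, ν {x | x p ≤ 0} = 0 ∧ ν {x | 1 < x p} = 0) ∧
      (∀ u ∈ cube d, C u + t n * αn n u = (ν {x | ∀ p, x p ≤ u p}).toReal))
    -- generalized inverses of the marginals of `Hₙ`:
    (Finv : ℕ → Fin d → ℝ → ℝ)
    (hFinv : ∀ n (p : Fin d), ∀ q ∈ Ioc (0:ℝ) 1,
      Finv n p q = sInf {x ∈ Icc (0:ℝ) 1 |
        q ≤ C (margVec p x) + t n * αn n (margVec p x)})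
    (hFinv0 : ∀ n (p : Fin d), Finv n p 0 = sSup {x ∈ Icc (0:ℝ) 1 |
        C (margVec p x) + t n * αn n (margVec p x) = 0}) :
    Tendsto (fun n => ⨆ u : cube d,
      |((C (fun p => Finv n p (u.1 p)) + t n * αn n (fun p => Finv n p (u.1 p))) - C u.1) / t n
        - (α u.1 - ∑ p, D p u.1 * α (margVec p (u.1 p)))|) atTop (nhds 0) :=
  Phi_hadamard_differentiable_at_copula_general d C hC D hDderiv hDcont hDbdry t ht0 htt α αn hunif
    hαcont hα1 hα0 hdom Finv hFinv hFinv0
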